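/- Let H0, H1, D, D*, V, Δ, Δ* and the universal colligation U0 be as in the universal-colligation setup, let U1 = [[A1,B1],[C1,D1]] : H1 ⊕ Δ → H1 ⊕ Δ* be a unitary colligation, and let W = F_ℓ(U0,U1) be the resulting unitary extension of V on H0 ⊕ H1. Then W is a minimal unitary extension of V — that is, the smallest closed subspace of H0 ⊕ H1 containing H0 ⊕ {0} and invariant for both W and W* is all of H0 ⊕ H1 — if and only if U1 is simple, that is, the smallest closed subspace of H1 containing range B1 and range C1* and invariant for both A1 and A1* is all of H1. -/

import Mathlib

open ContinuousLinearMap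

open scoped InnerProductSpace

/-!
Since `U1` is isometric, `A1* (A1 h + B1 δ) + C1* (C1 h + D1 δ) = h`, and since it is onto, every
`(y, ε)` is `U1 (A1* y + C1* ε, δ)` for some `δ`, whence `W (δ, A1* y + C1* ε) = (ε, y)`.
A closed subspace `S ⊇ H0 ⊕ 0` is `H0 ⊕ T` with `T = {x | (0, x) ∈ S}`, and these two identities
show that `H0 ⊕ T` reduces `W` exactly when `T` contains `range B1` and `range C1*` and reduces
`A1`.
-/

section Colligation

variable {𝕜 E F G K : Type*} [RCLike 𝕜]
  [NormedAddCommGroup E] [InnerProductSpace 𝕜 E] [CompleteSpace E]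
  [NormedAddCommGroup F] [InnerProductSpace 𝕜 F]
  [NormedAddCommGroup G] [InnerProductSpace 𝕜 G] [CompleteSpace G]
  [NormedAddCommGroup K] [InnerProductSpace 𝕜 K] [CompleteSpace K]

theorem adjoint_add_adjoint_eq_of_norm_sq_eq (A : E →L[𝕜] G) (B : F →L[𝕜] G)
    (C : E →L[𝕜] K) (D : F →L[𝕜] K)
    (hiso : ∀ x y, ‖A x + B y‖ ^ 2 + ‖C x + D y‖ ^ 2 = ‖x‖ ^ 2 + ‖y‖ ^ 2) (x : E) (y : F) :
    adjoint A (A x + B y) + adjoint C (C x + D y) = x := by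
  let U : WithLp 2 (E × F) →ₗ[𝕜] WithLp 2 (G × K) :=
    (WithLp.linearEquiv 2 𝕜 (G × K)).symm.toLinearMap ∘ₗ
      ((A : E →ₗ[𝕜] G).coprod B).prod ((C : E →ₗ[𝕜] K).coprod D) ∘ₗ
      (WithLp.linearEquiv 2 𝕜 (E × F)).toLinearMap
  have hU : ∀ p, ‖U p‖ = ‖p‖ := fun p => by
    rw [← sq_eq_sq₀ (norm_nonneg _) (norm_nonneg _), WithLp.prod_norm_sq_eq_of_L2,
      WithLp.prod_norm_sq_eq_of_L2]
    exact hiso _ _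
  refine ext_inner_right 𝕜 fun z => ?_
  have := (LinearMap.norm_map_iff_inner_map_map U).mp hU (WithLp.toLp 2 (x, y))
    (WithLp.toLp 2 (z, 0))
  simpa [U, inner_add_left, adjoint_inner_left] using this

end Colligation

theorem Submodule.eq_top_prod_comap_inr {R M N : Type*} [Ring R] [AddCommGroup M]
    [AddCommGroup N] [Module R M] [Module R N] {S : Submodule R (M × N)}
    (hS : ∀ m : M, (m, (0 : N)) ∈ S) :
    S = (⊤ : Submodule R M).prod (S.comap (LinearMap.inr R M N)) := by
  ext ⟨m, n⟩
  refine ⟨fun h => ⟨trivial, ?_⟩, fun ⟨_, h⟩ => ?_⟩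
  · simpa using S.sub_mem h (hS m)
  · simpa using S.add_mem (hS m) h

section Feedback

variable {H0 H1 : Type*}
  [NormedAddCommGroup H0] [InnerProductSpace ℂ H0]
  [NormedAddCommGroup H1] [InnerProductSpace ℂ H1]
  {D Dst : Submodule ℂ H0} [CompleteSpace D]

/-- `W` is the feedback connection `F_ℓ(U0, U1)` of the universal colligation of `V` with
`U1 = [[A1, B1], [C1, D1]]`. -/
def IsFeedbackConnection (V : D ≃ₗᵢ[ℂ] Dst) (A1 : H1 →L[ℂ] H1) (B1 : Dᗮ →L[ℂ] H1)
    (C1 : H1 →L[ℂ] Dstᗮ) (D1 : Dᗮ →L[ℂ] Dstᗮ) (W : H0 × H1 → H0 × H1) : Prop :=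
  ∀ (h : H0) (h1 : H1),
    W (h, h1) =
      ((V (D.orthogonalProjectionOnto h) : H0)
          + ((D1 (Dᗮ.orthogonalProjectionOnto h) : Dstᗮ) : H0)
          + ((C1 h1 : Dstᗮ) : H0),
        B1 (Dᗮ.orthogonalProjectionOnto h) + A1 h1)

variable {V : D ≃ₗᵢ[ℂ] Dst} {A1 : H1 →L[ℂ] H1} {B1 : Dᗮ →L[ℂ] H1} {C1 : H1 →L[ℂ] Dstᗮ}
  {D1 : Dᗮ →L[ℂ] Dstᗮ} {W : H0 × H1 → H0 × H1}

namespace IsFeedbackConnection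

theorem apply_snd (hW : IsFeedbackConnection V A1 B1 C1 D1 W) (h : H0) (x : H1) :
    (W (h, x)).2 = B1 (Dᗮ.orthogonalProjectionOnto h) + A1 x := by
  rw [hW]

theorem apply_orthogonal (hW : IsFeedbackConnection V A1 B1 C1 D1 W) (δ : Dᗮ) (x : H1) :
    W (δ, x) = (((D1 δ + C1 x : Dstᗮ) : H0), B1 δ + A1 x) := by
  rw [hW, Submodule.orthogonalProjectionOnto_apply_of_mem_orthogonal δ.2,
    Submodule.orthogonalProjectionOnto_mem_subspace_eq_self]
  simp

variable (T : Submodule ℂ H1)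

theorem mem_top_prod_iff (hW : IsFeedbackConnection V A1 B1 C1 D1 W) (h : H0) (x : H1) :
    W (h, x) ∈ (⊤ : Submodule ℂ H0).prod T ↔
      B1 (Dᗮ.orthogonalProjectionOnto h) + A1 x ∈ T := by
  rw [← hW.apply_snd]
  simp [Submodule.mem_prod]

variable [CompleteSpace H0] [CompleteSpace H1]

theorem adjoint_add_adjoint_mem (hW : IsFeedbackConnection V A1 B1 C1 D1 W)
    (hiso : ∀ (h1 : H1) (δ : Dᗮ),
      ‖A1 h1 + B1 δ‖ ^ 2 + ‖C1 h1 + D1 δ‖ ^ 2 = ‖h1‖ ^ 2 + ‖δ‖ ^ 2)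
    (hsurj : ∀ (y : H1) (ε : Dstᗮ), ∃ (h1 : H1) (δ : Dᗮ),
      A1 h1 + B1 δ = y ∧ C1 h1 + D1 δ = ε)
    (hback : ∀ p, W p ∈ (⊤ : Submodule ℂ H0).prod T → p ∈ (⊤ : Submodule ℂ H0).prod T)
    {y : H1} (hy : y ∈ T) (ε : Dstᗮ) : adjoint A1 y + adjoint C1 ε ∈ T := by
  obtain ⟨h1, δ, rfl, rfl⟩ := hsurj y ε
  rw [adjoint_add_adjoint_eq_of_norm_sq_eq A1 B1 C1 D1 hiso]
  have hWp : W (δ, h1) ∈ (⊤ : Submodule ℂ H0).prod T := by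
    rw [hW.apply_orthogonal, add_comm (D1 δ), add_comm (B1 δ)]
    exact ⟨trivial, hy⟩
  exact (hback _ hWp).2

theorem reduces_top_prod_iff (hW : IsFeedbackConnection V A1 B1 C1 D1 W)
    (hiso : ∀ (h1 : H1) (δ : Dᗮ),
      ‖A1 h1 + B1 δ‖ ^ 2 + ‖C1 h1 + D1 δ‖ ^ 2 = ‖h1‖ ^ 2 + ‖δ‖ ^ 2)
    (hsurj : ∀ (y : H1) (ε : Dstᗮ), ∃ (h1 : H1) (δ : Dᗮ),
      A1 h1 + B1 δ = y ∧ C1 h1 + D1 δ = ε) :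
    ((∀ p ∈ (⊤ : Submodule ℂ H0).prod T, W p ∈ (⊤ : Submodule ℂ H0).prod T) ∧
        (∀ p, W p ∈ (⊤ : Submodule ℂ H0).prod T → p ∈ (⊤ : Submodule ℂ H0).prod T)) ↔
      ((∀ δ : Dᗮ, B1 δ ∈ T) ∧ (∀ ε : Dstᗮ, adjoint C1 ε ∈ T) ∧
        (∀ x ∈ T, A1 x ∈ T) ∧ (∀ x ∈ T, adjoint A1 x ∈ T)) := by
  constructor
  · rintro ⟨hfwd, hback⟩
    refine ⟨fun δ => ?_, fun ε => ?_, fun x hx => ?_, fun y hy => ?_⟩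
    · simpa [hW.apply_orthogonal] using (hfwd ((δ : H0), 0) ⟨trivial, T.zero_mem⟩).2
    · simpa using hW.adjoint_add_adjoint_mem T hiso hsurj hback T.zero_mem ε
    · simpa [hW.apply_snd] using (hfwd (0, x) ⟨trivial, hx⟩).2
    · simpa using hW.adjoint_add_adjoint_mem T hiso hsurj hback hy 0
  · rintro ⟨hB, hC, hA, hA'⟩
    refine ⟨fun ⟨h, x⟩ hx => (hW.mem_top_prod_iff T h x).2 (T.add_mem (hB _) (hA x hx.2)),
      fun ⟨h, x⟩ hWx => ⟨trivial, ?_⟩⟩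
    rw [← adjoint_add_adjoint_eq_of_norm_sq_eq A1 B1 C1 D1 hiso x
      (Dᗮ.orthogonalProjectionOnto h), add_comm (A1 x)]
    exact T.add_mem (hA' _ ((hW.mem_top_prod_iff T h x).1 hWx)) (hC _)

end IsFeedbackConnection

end Feedback

theorem stmt_12 {H0 H1 : Type*}
    [NormedAddCommGroup H0] [InnerProductSpace ℂ H0] [CompleteSpace H0]
    [NormedAddCommGroup H1] [InnerProductSpace ℂ H1] [CompleteSpace H1]
    (D Dst : Submodule ℂ H0) [CompleteSpace D]
    (V : D ≃ₗᵢ[ℂ] Dst)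
    (A1 : H1 →L[ℂ] H1) (B1 : Dᗮ →L[ℂ] H1) (C1 : H1 →L[ℂ] Dstᗮ) (D1 : Dᗮ →L[ℂ] Dstᗮ)
    -- `U1 = [[A1,B1],[C1,D1]]` is a unitary colligation
    (hU1iso : ∀ (h1 : H1) (δ : Dᗮ),
        ‖A1 h1 + B1 δ‖ ^ 2 + ‖C1 h1 + D1 δ‖ ^ 2 = ‖h1‖ ^ 2 + ‖δ‖ ^ 2)
    (hU1surj : ∀ (y : H1) (ε : Dstᗮ), ∃ (h1 : H1) (δ : Dᗮ),
        A1 h1 + B1 δ = y ∧ C1 h1 + D1 δ = ε)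
    -- `W` is the feedback connection `F_ℓ(U0, U1)`, the corresponding unitary extension of `V`
    (W : (H0 × H1) →L[ℂ] (H0 × H1))
    (hW : ∀ (h : H0) (h1 : H1),
      W (h, h1) =
        ((V (D.orthogonalProjection h) : H0)
            + ((D1 (Dᗮ.orthogonalProjection h) : Dstᗮ) : H0)
            + ((C1 h1 : Dstᗮ) : H0),
          B1 (Dᗮ.orthogonalProjection h) + A1 h1)) :
    -- `W` is a minimal unitary extension of `V`
    (∀ S : Submodule ℂ (H0 × H1), IsClosed (S : Set (H0 × H1)) →
        (∀ h : H0, ((h, (0 : H1)) : H0 × H1) ∈ S) →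
        (∀ p ∈ S, W p ∈ S) →
        (∀ p : H0 × H1, W p ∈ S → p ∈ S) →
        S = ⊤) ↔
    -- `U1` is a simple unitary colligation
    (∀ T : Submodule ℂ H1, IsClosed (T : Set H1) →
        (∀ δ : Dᗮ, B1 δ ∈ T) →
        (∀ ε : Dstᗮ, adjoint C1 ε ∈ T) →
        (∀ x ∈ T, A1 x ∈ T) →
        (∀ x ∈ T, adjoint A1 x ∈ T) →
        T = ⊤) := by
  have hF : IsFeedbackConnection V A1 B1 C1 D1 W := hW
  constructor
  · intro hmin T hT hB hC hA hA'
    obtain ⟨hfwd, hback⟩ := (hF.reduces_top_prod_iff T hU1iso hU1surj).2 ⟨hB, hC, hA, hA'⟩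
    have hclosed : IsClosed (((⊤ : Submodule ℂ H0).prod T : Submodule ℂ (H0 × H1)) :
        Set (H0 × H1)) := isClosed_univ.prod hT
    have htop := hmin _ hclosed (fun h => ⟨trivial, T.zero_mem⟩) hfwd hback
    exact ((Submodule.prod_eq_top_iff _ _ _).mp htop).2
  · intro hsimple S hS h0 hfwd hback
    rw [Submodule.eq_top_prod_comap_inr h0] at hfwd hback ⊢
    obtain ⟨hB, hC, hA, hA'⟩ :=
      (hF.reduces_top_prod_iff _ hU1iso hU1surj).1 ⟨hfwd, hback⟩
    have hT : IsClosed ((S.comap (LinearMap.inr ℂ H0 H1) : Submodule ℂ H1) : Set H1) :=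
      hS.preimage (continuous_const.prodMk continuous_id)
    rw [hsimple _ hT hB hC hA hA', Submodule.prod_top]
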